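/- The pressure function for the Fibonacci-weighted Birkhoff average with potential f depending on two coordinates on {0,1}^ℕ satisfies: for every β ∈ ℝ, ψ(β) = (√5 − 2) log 2 + ((3−√5)/2) log(e^{β f(0,0)} + e^{β f(0,1)} + e^{β f(1,0)} + e^{β f(1,1)}), where ψ(β) is the Lyapunov exponent of the matrix products A_{ω_n}(β) with A_0(β) = 𝟙𝟙' (the all-ones 2×2 matrix), A_1(β) = (e^{β f(i,j)})_{i,j∈{0,1}}, and ω the Fibonacci sequence. -/

import Mathlib

/-!
Since `A₀ = 𝟙𝟙ᵀ`, we have `A₀ A₀ = 2 A₀` and `A₀ A₁ A₀ = S A₀` with `S = ∑ᵢⱼ e^{β f(i,j)}`.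
The Fibonacci word starts with `0` and never contains `11`, so the product of its first `n`
letters has entry sum `2^{n+1} (S/4)^{a(n)}`, where `a(n)` is the number of ones among them.

The words `W_m = ζ^m(0)` satisfy `W_{m+2} = W_{m+1} W_m`, have length `F_{m+2}` and contain
`F_m` ones, and `F_m - ψ² F_{m+2} = -ψ^{m+2}` for `ψ = (1 - √5)/2`. Splitting a prefix along
this recursion (a Zeckendorf decomposition of `n`) writes the discrepancy `a(n) - ψ² n` as a sum
of terms `-ψ^k` over non-consecutive `k`, so it stays in `[-1, 1]` and `a(n)/n → ψ² = (3-√5)/2`.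
-/

open Filter Topology Matrix

/-- The entry-sum norm `‖A‖ = ∑ᵢⱼ |aᵢⱼ|`. -/
def entrySumNorm {d : ℕ} (A : Matrix (Fin d) (Fin d) ℝ) : ℝ := ∑ i, ∑ j, |A i j|

/-- The product `A_{ω₀} A_{ω₁} ⋯ A_{ω_{n-1}}` of matrices selected along the sequence `ω`. -/
def prodAlong {d m : ℕ} (A : Fin m → Matrix (Fin d) (Fin d) ℝ) (ω : ℕ → Fin m) (n : ℕ) :
    Matrix (Fin d) (Fin d) ℝ :=
  (List.ofFn fun i : Fin n => A (ω i)).prod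

/-- The Fibonacci substitution `0 ↦ 01`, `1 ↦ 0`. -/
def fibSub : Fin 2 → List (Fin 2)
  | 0 => [0, 1]
  | 1 => [0]

/-- The Fibonacci sequence, the fixed point `ζ^∞(0)` of the Fibonacci substitution. -/
def fibSeq (k : ℕ) : Fin 2 :=
  ((fun l => l.flatMap fibSub)^[k + 2] [0]).getD k 0

/-- The matrices `A₀(β) = 𝟙𝟙ᵀ` (all ones) and `A₁(β) = (e^{β f(i,j)})`. -/
noncomputable def pressureMat (f : Fin 2 → Fin 2 → ℝ) (β : ℝ) :
    Fin 2 → Matrix (Fin 2) (Fin 2) ℝ := fun s =>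
  if s = 0 then Matrix.of (fun _ _ => 1) else Matrix.of fun i j => Real.exp (β * f i j)

open Real goldenRatio

def fibWord (m : ℕ) : List (Fin 2) := (fun l => l.flatMap fibSub)^[m] [0]

def fibPrefix (n : ℕ) : List (Fin 2) := List.ofFn fun i : Fin n => fibSeq i

theorem fibWord_succ (m : ℕ) : fibWord (m + 1) = (fibWord m).flatMap fibSub :=
  Function.iterate_succ_apply' _ _ _

theorem fibWord_add_two (m : ℕ) : fibWord (m + 2) = fibWord (m + 1) ++ fibWord m := by
  induction m with
  | zero => rfl
  | succ m ih =>
    rw [fibWord_succ (m + 2), ih, List.flatMap_append, ← fibWord_succ (m + 1), ← fibWord_succ m]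
    exact congrArg (· ++ fibWord (m + 1)) ih

theorem length_fibWord (m : ℕ) : (fibWord m).length = Nat.fib (m + 2) := by
  induction m using Nat.twoStepInduction with
  | zero => rfl
  | one => rfl
  | more m ih₀ ih₁ =>
    rw [fibWord_add_two, List.length_append, ih₀, ih₁, Nat.fib_add_two (n := m + 2), add_comm]

theorem count_one_fibWord (m : ℕ) : (fibWord m).count 1 = Nat.fib m := by
  induction m using Nat.twoStepInduction with
  | zero => rfl
  | one => rfl
  | more m ih₀ ih₁ => rw [fibWord_add_two, List.count_append, ih₀, ih₁, Nat.fib_add_two, add_comm]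

theorem fibWord_prefix_succ (m : ℕ) : fibWord m <+: fibWord (m + 1) := by
  cases m with
  | zero => exact ⟨[1], rfl⟩
  | succ m => rw [fibWord_add_two]; exact List.prefix_append _ _

theorem fibWord_prefix_of_le {m m' : ℕ} (h : m ≤ m') : fibWord m <+: fibWord m' := by
  induction m', h using Nat.le_induction with
  | base => exact List.prefix_refl _
  | succ m' _ ih => exact ih.trans (fibWord_prefix_succ m')

theorem lt_length_fibWord (k : ℕ) : k < (fibWord (k + 1)).length := by
  rw [length_fibWord]
  exact Nat.fib_add_two_strictMono.id_le (k + 1)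

theorem fibSeq_eq_getElem {k m : ℕ} (hk : k < (fibWord m).length) : fibSeq k = (fibWord m)[k] := by
  have hk' : k < (fibWord (k + 2)).length :=
    (lt_length_fibWord k).trans_le (fibWord_prefix_succ _).length_le
  change (fibWord (k + 2)).getD k 0 = _
  rw [List.getD_eq_getElem _ _ hk']
  rcases le_total m (k + 2) with h | h
  · exact ((fibWord_prefix_of_le h).getElem hk).symm
  · exact (fibWord_prefix_of_le h).getElem hk'

theorem take_fibWord {n m : ℕ} (hn : n ≤ (fibWord m).length) :
    (fibWord m).take n = fibPrefix n := by
  refine List.ext_getElem (by simp [fibPrefix, hn]) fun k hk _ => ?_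
  simp only [List.getElem_take, fibPrefix, List.getElem_ofFn]
  exact (fibSeq_eq_getElem _).symm

theorem fibPrefix_fib_add {m n : ℕ} (hn : n ≤ Nat.fib (m + 2)) :
    fibPrefix (Nat.fib (m + 3) + n) = fibWord (m + 1) ++ fibPrefix n := by
  have hfib : Nat.fib (m + 4) = Nat.fib (m + 2) + Nat.fib (m + 3) := Nat.fib_add_two
  have hlen : Nat.fib (m + 3) + n ≤ (fibWord (m + 2)).length := by
    rw [length_fibWord, hfib]; omega
  have hlen₁ : (fibWord (m + 1)).length = Nat.fib (m + 3) := length_fibWord _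
  rw [← take_fibWord hlen, fibWord_add_two, List.take_append, hlen₁,
    List.take_of_length_le (by omega), Nat.add_sub_cancel_left,
    take_fibWord (by rwa [length_fibWord])]

theorem isChain_flatMap_fibSub (l : List (Fin 2)) :
    (l.flatMap fibSub).IsChain fun a b => a = 0 ∨ b = 0 := by
  induction l with
  | nil => exact List.IsChain.nil
  | cons x l ih =>
    rw [List.flatMap_cons, List.isChain_append]
    refine ⟨by fin_cases x <;> simp [fibSub], ih, fun _ _ b hb => Or.inr ?_⟩
    cases l with
    | nil => simp at hb
    | cons y l => fin_cases y <;> simp_all [fibSub]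

theorem isChain_fibPrefix (n : ℕ) : (fibPrefix n).IsChain fun a b => a = 0 ∨ b = 0 := by
  rw [← take_fibWord (m := n + 1) (lt_length_fibWord n).le, fibWord_succ]
  exact (isChain_flatMap_fibSub _).take n

theorem head?_fibPrefix (n : ℕ) : ∀ x ∈ (fibPrefix n).head?, x = 0 := by
  cases n <;> simp [fibPrefix, List.ofFn_succ, show fibSeq 0 = 0 from rfl]

theorem fib_sub_goldenConj_sq_mul_fib (m : ℕ) :
    (Nat.fib m : ℝ) - ψ ^ 2 * Nat.fib (m + 2) = -ψ ^ (m + 2) := by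
  rw [← goldenConj_mul_fib_succ_add_fib (m + 1), goldenConj_sq, Nat.fib_add_two (n := m)]
  push_cast
  ring

theorem abs_goldenConj_sq_add_abs_goldenConj : |ψ| ^ 2 + |ψ| = 1 := by
  rw [abs_of_neg goldenConj_neg, neg_sq, goldenConj_sq]
  ring

theorem abs_goldenConj_le_one : |ψ| ≤ 1 :=
  abs_le.2 ⟨neg_one_lt_goldenConj.le, goldenConj_neg.le.trans zero_le_one⟩

noncomputable def onesDiscrepancy (n : ℕ) : ℝ := ((fibPrefix n).count 1 : ℝ) - ψ ^ 2 * n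

theorem onesDiscrepancy_fib_add {m n : ℕ} (hn : n ≤ Nat.fib (m + 2)) :
    onesDiscrepancy (Nat.fib (m + 3) + n) = -ψ ^ (m + 3) + onesDiscrepancy n := by
  rw [← fib_sub_goldenConj_sq_mul_fib, onesDiscrepancy, onesDiscrepancy, fibPrefix_fib_add hn,
    List.count_append, count_one_fibWord]
  push_cast
  ring

theorem abs_onesDiscrepancy_le (m : ℕ) :
    ∀ n < Nat.fib (m + 2), |onesDiscrepancy n| ≤ 1 - |ψ| ^ m := by
  induction m using Nat.twoStepInduction with
  | zero =>
    intro n hn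
    obtain rfl : n = 0 := by simpa using hn
    simp [onesDiscrepancy, fibPrefix]
  | one =>
    intro n (hn : n < 2)
    interval_cases n
    · simpa [onesDiscrepancy, fibPrefix] using abs_goldenConj_le_one
    · have hcount : (fibPrefix 1).count 1 = 0 := rfl
      rw [onesDiscrepancy, hcount, Nat.cast_zero, Nat.cast_one, zero_sub, mul_one, abs_neg,
        abs_pow, pow_one]
      linarith [abs_goldenConj_sq_add_abs_goldenConj]
  | more m ih₀ ih₁ =>
    intro n (hn : n < Nat.fib (m + 4))
    have hpow_le : ∀ k, |ψ| ^ (k + 1) ≤ |ψ| ^ k := fun k =>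
      pow_le_pow_of_le_one (abs_nonneg ψ) abs_goldenConj_le_one k.le_succ
    by_cases hsmall : n < Nat.fib (m + 3)
    · linarith [ih₁ n hsmall, hpow_le (m + 1)]
    have hfib : Nat.fib (m + 4) = Nat.fib (m + 2) + Nat.fib (m + 3) := Nat.fib_add_two
    obtain ⟨n, rfl⟩ : ∃ n', n = Nat.fib (m + 3) + n' := ⟨n - Nat.fib (m + 3), by omega⟩
    have hn' : n < Nat.fib (m + 2) := by omega
    have hgeom : |ψ| ^ (m + 3) + |ψ| ^ (m + 2) = |ψ| ^ (m + 1) := by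
      rw [← mul_one (|ψ| ^ (m + 1)), ← abs_goldenConj_sq_add_abs_goldenConj]
      ring
    calc |onesDiscrepancy (Nat.fib (m + 3) + n)|
        ≤ |ψ| ^ (m + 3) + |onesDiscrepancy n| := by
          rw [onesDiscrepancy_fib_add hn'.le]
          exact (abs_add_le _ _).trans_eq (by rw [abs_neg, abs_pow])
      _ ≤ 1 - |ψ| ^ (m + 2) := by linarith [ih₀ n hn', hpow_le m]

theorem abs_onesDiscrepancy_le_one (n : ℕ) : |onesDiscrepancy n| ≤ 1 :=
  (abs_onesDiscrepancy_le (n + 1) n (Nat.fib_add_two_strictMono.id_le (n + 1))).trans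
    (sub_le_self _ (pow_nonneg (abs_nonneg ψ) _))

theorem tendsto_div_of_abs_sub_mul_le {u : ℕ → ℝ} {q C : ℝ} (h : ∀ n, |u n - q * n| ≤ C) :
    Tendsto (fun n => u n / n) atTop (𝓝 q) := by
  have hdiff : Tendsto (fun n : ℕ => u n / n - q) atTop (𝓝 0) := by
    refine squeeze_zero_norm' ?_ (tendsto_const_div_atTop_nhds_zero_nat C)
    filter_upwards [eventually_ne_atTop 0] with n hn
    have hn_pos : (0 : ℝ) < n := Nat.cast_pos.2 (Nat.pos_of_ne_zero hn)
    have hrw : u n / n - q = (u n - q * n) / n := by field_simp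
    rw [Real.norm_eq_abs, hrw, abs_div, abs_of_pos hn_pos]
    gcongr
    exact h n
  simpa using hdiff.add_const q

theorem tendsto_count_one_fibPrefix_div :
    Tendsto (fun n => ((fibPrefix n).count 1 : ℝ) / n) atTop (𝓝 (ψ ^ 2)) :=
  tendsto_div_of_abs_sub_mul_le abs_onesDiscrepancy_le_one

theorem tendsto_log_pow_mul_pow_div {a : ℕ → ℕ} {q c s : ℝ}
    (ha : Tendsto (fun n => (a n : ℝ) / n) atTop (𝓝 q)) (hc : c ≠ 0) (hs : s ≠ 0) :
    Tendsto (fun n : ℕ => Real.log (c ^ (n + 1) * s ^ a n) / n) atTop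
      (𝓝 (Real.log c + q * Real.log s)) := by
  have hlim : Tendsto (fun n : ℕ => Real.log c + (a n : ℝ) / n * Real.log s + Real.log c / n)
      atTop (𝓝 (Real.log c + q * Real.log s + 0)) :=
    ((ha.mul_const _).const_add _).add (tendsto_const_div_atTop_nhds_zero_nat _)
  rw [add_zero] at hlim
  refine hlim.congr' ?_
  filter_upwards [eventually_ne_atTop 0] with n hn
  rw [Real.log_mul (pow_ne_zero _ hc) (pow_ne_zero _ hs), Real.log_pow, Real.log_pow]
  field_simp
  push_cast
  ring

section AllOnes

variable {d : ℕ}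

theorem entrySum_smul (c : ℝ) (M : Matrix (Fin d) (Fin d) ℝ) :
    ∑ i, ∑ j, (c • M) i j = c * ∑ i, ∑ j, M i j := by
  simp only [Matrix.smul_apply, smul_eq_mul, Finset.mul_sum]

theorem allOnes_mul_allOnes :
    (of fun _ _ => 1 : Matrix (Fin d) (Fin d) ℝ) * of (fun _ _ => 1) =
      (d : ℝ) • of fun _ _ => 1 := by
  ext i j
  simp [Matrix.mul_apply]

theorem allOnes_mul_mul_allOnes (B : Matrix (Fin d) (Fin d) ℝ) :
    of (fun _ _ => 1) * B * of (fun _ _ => 1) = (∑ i, ∑ j, B i j) • of fun _ _ => (1 : ℝ) := by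
  ext i j
  simp [Matrix.mul_apply, Finset.sum_comm (γ := Fin d)]

theorem entrySum_allOnes_mul (B : Matrix (Fin d) (Fin d) ℝ) :
    ∑ i, ∑ j, ((of fun _ _ => 1 : Matrix (Fin d) (Fin d) ℝ) * B) i j = d * ∑ i, ∑ j, B i j := by
  simp only [Matrix.mul_apply, of_apply, one_mul, Finset.sum_const, Finset.card_univ,
    Fintype.card_fin, nsmul_eq_mul]
  rw [Finset.sum_comm]

/- A word without `11` that does not start with `1` is a concatenation of blocks `0` and `01`;
since `A 0 = 𝟙𝟙ᵀ`, each block contributes the factor `𝟙ᵀ𝟙 = d` or `𝟙ᵀ (A 1) 𝟙`. -/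
theorem entrySum_prod_map_of_isChain [NeZero d] (A : Fin 2 → Matrix (Fin d) (Fin d) ℝ)
    (hA : A 0 = of fun _ _ => 1) :
    ∀ w : List (Fin 2), w.IsChain (fun a b => a = 0 ∨ b = 0) → (∀ x ∈ w.head?, x = 0) →
      ∑ i, ∑ j, (w.map A).prod i j =
        (d : ℝ) ^ (w.length + 1) * ((∑ i, ∑ j, A 1 i j) / (d : ℝ) ^ 2) ^ w.count 1
  | [], _, _ => by simp [Matrix.one_apply]
  | [0], _, _ => by simp [hA, sq]
  | 0 :: 0 :: w, hw, _ => by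
    have ih := entrySum_prod_map_of_isChain A hA (0 :: w) hw.tail (by simp)
    simp only [List.map_cons, List.prod_cons, hA] at ih ⊢
    rw [← mul_assoc, allOnes_mul_allOnes, smul_mul_assoc, entrySum_smul, ih]
    simp only [List.length_cons, List.count_cons_of_ne zero_ne_one]
    ring
  | [0, 1], _, _ => by
    have hd : (d : ℝ) ≠ 0 := NeZero.ne _
    show _ = (d : ℝ) ^ 3 * ((∑ i, ∑ j, A 1 i j) / (d : ℝ) ^ 2) ^ 1
    rw [List.map_cons, List.map_singleton, List.prod_cons, List.prod_singleton, hA,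
      entrySum_allOnes_mul]
    field_simp
  | 0 :: 1 :: 0 :: w, hw, _ => by
    have hd : (d : ℝ) ≠ 0 := NeZero.ne _
    have ih := entrySum_prod_map_of_isChain A hA (0 :: w) hw.tail.tail (by simp)
    simp only [List.map_cons, List.prod_cons, hA] at ih ⊢
    rw [← mul_assoc, ← mul_assoc, allOnes_mul_mul_allOnes, smul_mul_assoc, entrySum_smul, ih]
    simp only [List.length_cons, List.count_cons_self, List.count_cons_of_ne zero_ne_one,
      div_pow]
    field_simp
    ring
  | 0 :: 1 :: 1 :: w, hw, _ => by simp at hw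
  | 1 :: _, _, h => absurd (h 1 rfl) (by decide)

end AllOnes

theorem entrySumNorm_eq_sum_of_nonneg {d : ℕ} {M : Matrix (Fin d) (Fin d) ℝ}
    (hM : ∀ i j, 0 ≤ M i j) : entrySumNorm M = ∑ i, ∑ j, M i j := by
  simp only [entrySumNorm, abs_of_nonneg (hM _ _)]

theorem prod_nonneg_of_forall_nonneg {d : ℕ} :
    ∀ l : List (Matrix (Fin d) (Fin d) ℝ), (∀ M ∈ l, ∀ i j, 0 ≤ M i j) → ∀ i j, 0 ≤ l.prod i j
  | [], _, i, j => by
    rw [List.prod_nil, Matrix.one_apply]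
    split_ifs <;> norm_num
  | M :: l, h, i, j => by
    rw [List.prod_cons, Matrix.mul_apply]
    exact Finset.sum_nonneg fun k _ =>
      mul_nonneg (h M List.mem_cons_self i k)
        (prod_nonneg_of_forall_nonneg l (fun N hN => h N (List.mem_cons_of_mem M hN)) k j)

theorem prodAlong_eq_prod_map_ofFn {d m : ℕ} (A : Fin m → Matrix (Fin d) (Fin d) ℝ)
    (ω : ℕ → Fin m) (n : ℕ) :
    prodAlong A ω n = ((List.ofFn fun i : Fin n => ω i).map A).prod := by
  rw [prodAlong, List.map_ofFn]
  rfl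

theorem entrySumNorm_prodAlong_pressureMat_fibSeq (f : Fin 2 → Fin 2 → ℝ) (β : ℝ) (n : ℕ) :
    entrySumNorm (prodAlong (pressureMat f β) fibSeq n) =
      2 ^ (n + 1) * ((∑ i, ∑ j, Real.exp (β * f i j)) / 2 ^ 2) ^ (fibPrefix n).count 1 := by
  have hprod : prodAlong (pressureMat f β) fibSeq n = ((fibPrefix n).map (pressureMat f β)).prod :=
    prodAlong_eq_prod_map_ofFn _ _ n
  have hnonneg : ∀ M ∈ (fibPrefix n).map (pressureMat f β), ∀ i j, 0 ≤ M i j := by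
    intro M hM i j
    obtain ⟨s, -, rfl⟩ := List.mem_map.1 hM
    by_cases hs : s = 0 <;> simp [pressureMat, hs, Real.exp_nonneg]
  rw [hprod, entrySumNorm_eq_sum_of_nonneg (prod_nonneg_of_forall_nonneg _ hnonneg),
    entrySum_prod_map_of_isChain _ (by simp [pressureMat]) _ (isChain_fibPrefix n)
      (head?_fibPrefix n)]
  simp [fibPrefix, pressureMat]

/-- The pressure function of the Fibonacci-weighted Birkhoff average, i.e. the Lyapunov exponent
of the products of `A₀(β) = 𝟙𝟙ᵀ` and `A₁(β) = (e^{β f(i,j)})` selected along the Fibonacci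
sequence, equals `(√5-2) log 2 + ((3-√5)/2) log(∑_{i,j} e^{β f(i,j)})`. -/
theorem pressure_fibonacci_weight (f : Fin 2 → Fin 2 → ℝ) (β : ℝ) :
    Tendsto (fun n => Real.log (entrySumNorm (prodAlong (pressureMat f β) fibSeq n)) / n)
      atTop (𝓝 ((Real.sqrt 5 - 2) * Real.log 2 +
        ((3 - Real.sqrt 5) / 2) * Real.log (∑ i, ∑ j, Real.exp (β * f i j)))) := by
  have hsum : 0 < ∑ i, ∑ j, Real.exp (β * f i j) := by positivity
  simp_rw [entrySumNorm_prodAlong_pressureMat_fibSeq]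
  convert tendsto_log_pow_mul_pow_div tendsto_count_one_fibPrefix_div two_ne_zero
    (div_pos hsum (pow_pos two_pos 2)).ne' using 2
  rw [goldenConj_sq, Real.log_div hsum.ne' (by norm_num), Real.log_pow]
  push_cast
  ring
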